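/- The k-algebra automorphism g of B determined by g(a) = a and g(b) = b − a fixes both a^p and b^p; equivalently, the identity (b − a)^p = b^p holds in B. -/
import Mathlib


noncomputable section

variable (k : Type*) [Field k]

/-- The generator `a` of the free algebra `k⟨a,b⟩`. -/
def aF : FreeAlgebra k (Fin 2) := FreeAlgebra.ι k 0

/-- The generator `b` of the free algebra `k⟨a,b⟩`. -/
def bF : FreeAlgebra k (Fin 2) := FreeAlgebra.ι k 1

/-- The defining relation `ba = ab + (1/2)a²` of `B`. -/
inductive BRel : FreeAlgebra k (Fin 2) → FreeAlgebra k (Fin 2) → Prop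
  | rel : BRel (bF k * aF k) (aF k * bF k + (2 : k)⁻¹ • aF k ^ 2)

/-- The algebra `B = k⟨a,b⟩/(ba − ab − (1/2)a²)`. -/
abbrev B := RingQuot (BRel k)

/-- The image of `a` in `B`. -/
def aB : B k := RingQuot.mkAlgHom k (BRel k) (aF k)

/-- The image of `b` in `B`. -/
def bB : B k := RingQuot.mkAlgHom k (BRel k) (bF k)

lemma rel_ba : bB k * aB k = aB k * bB k + (2 : k)⁻¹ • aB k ^ 2 := by
  have := RingQuot.mkAlgHom_rel k (BRel.rel (k := k))
  simpa [aB, bB, map_mul, map_add, map_smul, map_pow] using this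

lemma rel_ca (h2 : (2 : k) ≠ 0) :
    (bB k - aB k) * aB k = aB k * bB k - (2 : k)⁻¹ • aB k ^ 2 := by
  rw [sub_mul, rel_ba, ← sq]
  match_scalars <;> field_simp <;> ring

lemma rel_cb (m : ℕ) :
    (bB k - aB k) * bB k ^ m = bB k ^ (m + 1) - aB k * bB k ^ m := by
  rw [sub_mul, pow_succ']

lemma rel_cab (h2 : (2 : k) ≠ 0) (m : ℕ) :
    (bB k - aB k) * (aB k * bB k ^ m)
      = aB k * bB k ^ (m + 1) - (2 : k)⁻¹ • (aB k ^ 2 * bB k ^ m) := by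
  rw [← mul_assoc, rel_ca k h2, sub_mul, smul_mul_assoc, mul_assoc, ← pow_succ']

lemma rel_ca2 (h2 : (2 : k) ≠ 0) (m : ℕ) :
    (bB k - aB k) * (aB k ^ 2 * bB k ^ m) = aB k ^ 2 * bB k ^ (m + 1) := by
  have haa : aB k * aB k ^ 2 = aB k ^ 2 * aB k := by
    rw [← pow_succ, ← pow_succ']
  have key : (bB k - aB k) * aB k ^ 2 = aB k ^ 2 * bB k := by
    calc (bB k - aB k) * aB k ^ 2
        = ((bB k - aB k) * aB k) * aB k := by rw [sq, mul_assoc]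
      _ = (aB k * bB k - (2 : k)⁻¹ • aB k ^ 2) * aB k := by rw [rel_ca k h2]
      _ = aB k * (bB k * aB k) - (2 : k)⁻¹ • (aB k ^ 2 * aB k) := by
          rw [sub_mul, mul_assoc, smul_mul_assoc]
      _ = aB k * (aB k * bB k + (2 : k)⁻¹ • aB k ^ 2)
            - (2 : k)⁻¹ • (aB k ^ 2 * aB k) := by rw [rel_ba]
      _ = aB k ^ 2 * bB k + (2 : k)⁻¹ • (aB k ^ 2 * aB k)
            - (2 : k)⁻¹ • (aB k ^ 2 * aB k) := by
          rw [mul_add, mul_smul_comm, ← mul_assoc, ← sq, haa]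
      _ = aB k ^ 2 * bB k := by abel
  rw [← mul_assoc, key, mul_assoc, ← pow_succ']

lemma key_pow (h2 : (2 : k) ≠ 0) (n : ℕ) :
    (bB k - aB k) ^ (n + 2)
      = bB k ^ (n + 2) - (((n + 2 : ℕ) : k)) • (aB k * bB k ^ (n + 1))
        + ((((n + 2) * (n + 1) : ℕ) : k) * (4 : k)⁻¹) • (aB k ^ 2 * bB k ^ n) := by
  have h4 : (4 : k) ≠ 0 := by
    have : (4 : k) = 2 * 2 := by norm_num
    rw [this]; exact mul_ne_zero h2 h2
  induction n with
  | zero =>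
      have h : (bB k - aB k) ^ (0 + 2)
          = bB k * bB k - aB k * bB k - bB k * aB k + aB k * aB k := by
        rw [pow_succ, pow_succ, pow_zero, one_mul, sub_mul, mul_sub, mul_sub]; abel
      rw [h, rel_ba, ← sq (aB k)]
      have hb1 : bB k * bB k = bB k ^ (0 + 2) := by rw [sq]
      have hab : aB k * bB k = aB k * bB k ^ (0 + 1) := by rw [pow_one]
      have ha2 : aB k ^ 2 = aB k ^ 2 * bB k ^ 0 := by rw [pow_zero, mul_one]
      conv_lhs => rw [hb1, hab, ha2]
      match_scalars <;> push_cast <;> field_simp <;> ring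
  | succ n ih =>
      have h : (bB k - aB k) ^ (n + 3) = (bB k - aB k) * (bB k - aB k) ^ (n + 2) := by
        rw [← pow_succ']
      rw [h, ih, mul_add, mul_sub, mul_smul_comm, mul_smul_comm,
        rel_cb, rel_cab k h2, rel_ca2 k h2]
      match_scalars <;> push_cast <;> field_simp <;> ring

/-- The `k`-algebra automorphism `g` of `B` determined by `g(a) = a` and
`g(b) = b − a` fixes both `a^p` and `b^p`; equivalently, `(b − a)^p = b^p` in `B`. -/
theorem g_fixes_ap_bp (p : ℕ) [CharP k p] (hp : 2 < p) :
    (∀ g : B k ≃ₐ[k] B k, g (aB k) = aB k → g (bB k) = bB k - aB k →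
      g (aB k ^ p) = aB k ^ p ∧ g (bB k ^ p) = bB k ^ p) ∧
    (bB k - aB k) ^ p = bB k ^ p := by
  have h2 : (2 : k) ≠ 0 := by
    have : ((2 : ℕ) : k) ≠ 0 := by
      rw [Ne, CharP.cast_eq_zero_iff k p]
      intro hdvd
      exact absurd (Nat.le_of_dvd (by norm_num) hdvd) (by omega)
    simpa using this
  obtain ⟨n, hn⟩ : ∃ n, p = n + 2 := ⟨p - 2, by omega⟩
  have hmain : (bB k - aB k) ^ p = bB k ^ p := by
    rw [hn, key_pow k h2 n]
    have c1 : (((n + 2 : ℕ) : k)) = 0 := by rw [← hn]; exact CharP.cast_eq_zero k p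
    have c2 : ((((n + 2) * (n + 1) : ℕ) : k)) = 0 := by
      push_cast
      rw [show ((n : k) + 2) = ((n + 2 : ℕ) : k) by push_cast; ring, c1]
      ring
    rw [c1, c2, zero_smul, zero_mul, zero_smul, sub_zero, add_zero]
  refine ⟨fun g hga hgb => ⟨?_, ?_⟩, hmain⟩
  · rw [map_pow, hga]
  · rw [map_pow, hgb, hmain]


end
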